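/- arXiv:1910.06665 — 4 statements merged into one kernel-verified Lean document; each statement's English description precedes it below -/
import Mathlib

section
/- Let M = (E,*,cx) be a reduced oriented matroid and let C be a circuit of M. Then for any x ∈ C, the set (C \ {x}) ∪ {x*} contains no circuit of M. -/
/-- An oriented matroid: a ground set `E` with a fixed-point-free involution `star`
and a finitary closure operator `cx` satisfying axioms (M4)-(M6). -/
structure OMatroid (E : Type*) where
  star : E → E
  cx : Set E → Set E
  star_star : ∀ x, star (star x) = x
  star_ne : ∀ x, star x ≠ x
  subset_cx : ∀ A : Set E, A ⊆ cx A
  cx_mono : ∀ ⦃A B : Set E⦄, A ⊆ B → cx A ⊆ cx B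
  cx_cx : ∀ A : Set E, cx (cx A) = cx A
  finitary : ∀ (A : Set E) (x : E), x ∈ cx A → ∃ B ⊆ A, B.Finite ∧ x ∈ cx B
  cx_star : ∀ A : Set E, cx (star '' A) = star '' cx A
  M5 : ∀ (A : Set E) (x : E), x ∈ cx (A ∪ {star x}) → x ∈ cx A
  M6 : ∀ (A : Set E) (x y : E), x ∈ cx (A ∪ {star y}) → x ∉ cx A →
        y ∈ cx ((A \ {y}) ∪ {star x})

namespace OMatroid

variable {E : Type*} (M : OMatroid E)

/-- A circuit: a minimal nonempty subset `C` with `C* ⊆ cx C`. -/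
def IsCircuit (C : Set E) : Prop :=
  C.Nonempty ∧ M.star '' C ⊆ M.cx C ∧
    ∀ D ⊆ C, D.Nonempty → M.star '' D ⊆ M.cx D → D = C

/-- The set of loops. -/
def loops : Set E := M.cx ∅

def IsClosed (F : Set E) : Prop := M.cx F = F

/-- A sharp: a closed set `F` with `F ∩ F* = L`. -/
def IsSharp (F : Set E) : Prop := M.IsClosed F ∧ F ∩ M.star '' F = M.loops

/-- A hemispace: a closed set `H` with `H ∪ H* = E` and `H ∩ H* = L`. -/
def IsHemispace (H : Set E) : Prop :=
  M.IsClosed H ∧ H ∪ M.star '' H = Set.univ ∧ H ∩ M.star '' H = M.loops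

end OMatroid

/-!
If `x ∈ cx (C \ {x})` then `C \ {x}` already spans `C`, hence `C*`, and minimality of `C` forces
`C \ {x} = C`; reducedness rules out the degenerate case `C = {x}`. So `x ∉ cx (C \ {x})`.
Now let `D ⊆ (C \ {x}) ∪ {x*}` be a circuit. If `x* ∈ D` then `x ∈ cx D`, and axiom (M5) puts `x`
into `cx (C \ {x})`. Otherwise `D ⊆ C \ {x}` is a circuit properly inside `C`.
-/

namespace OMatroid

variable {E : Type*} (M : OMatroid E)

theorem cx_diff_singleton_eq {A : Set E} {x : E} (hx : x ∈ M.cx (A \ {x})) :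
    M.cx (A \ {x}) = M.cx A := by
  refine (M.cx_mono Set.sdiff_subset).antisymm ?_
  have hA : A ⊆ M.cx (A \ {x}) := fun y hy => by
    by_cases hyx : y = x
    · exact hyx ▸ hx
    · exact M.subset_cx _ ⟨hy, hyx⟩
  simpa only [M.cx_cx] using M.cx_mono hA

theorem mem_cx_of_star_mem {D : Set E} (hD : M.star '' D ⊆ M.cx D) {x : E}
    (hx : M.star x ∈ D) : x ∈ M.cx D :=
  hD ⟨M.star x, hx, M.star_star x⟩

variable {M}

theorem IsCircuit.eq_of_subset {C D : Set E} (hC : M.IsCircuit C) (hD : M.IsCircuit D)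
    (hDC : D ⊆ C) : D = C :=
  hC.2.2 D hDC hD.1 hD.2.1

theorem IsCircuit.not_subset_diff_singleton {C D : Set E} (hC : M.IsCircuit C)
    (hD : M.IsCircuit D) {x : E} (hx : x ∈ C) : ¬ D ⊆ C \ {x} := fun hDC =>
  (hDC ((hC.eq_of_subset hD (hDC.trans Set.sdiff_subset)).symm ▸ hx)).2 rfl

theorem IsCircuit.notMem_cx_diff_singleton (hred : M.cx ∅ = ∅) {C : Set E}
    (hC : M.IsCircuit C) {x : E} (hx : x ∈ C) : x ∉ M.cx (C \ {x}) := by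
  intro hxC
  have hspan := M.cx_diff_singleton_eq hxC
  have hne : (C \ {x}).Nonempty := Set.nonempty_iff_ne_empty.2 fun h => by
    rw [h, hred] at hxC
    exact hxC
  have hstar : M.star '' (C \ {x}) ⊆ M.cx (C \ {x}) :=
    hspan ▸ (Set.image_mono Set.sdiff_subset).trans hC.2.1
  exact ((hC.2.2 _ Set.sdiff_subset hne hstar).symm ▸ hx : x ∈ C \ {x}).2 rfl

end OMatroid

/-- In a reduced oriented matroid, if `C` is a circuit and `x ∈ C`,
then `(C \ {x}) ∪ {x*}` contains no circuit. -/
theorem stmt_0 {E : Type*} (M : OMatroid E) (hred : M.cx ∅ = ∅)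
    (C : Set E) (hC : M.IsCircuit C) (x : E) (hx : x ∈ C) :
    ∀ D ⊆ (C \ {x}) ∪ {M.star x}, ¬ M.IsCircuit D := by
  intro D hD hDc
  by_cases hxD : M.star x ∈ D
  · have hxcx : x ∈ M.cx ((C \ {x}) ∪ {M.star x}) :=
      M.cx_mono hD (M.mem_cx_of_star_mem hDc.2.1 hxD)
    exact hC.notMem_cx_diff_singleton hred hx (M.M5 _ x hxcx)
  · refine hC.not_subset_diff_singleton hDc hx fun y hy => ?_
    rcases hD hy with hyC | rfl
    · exact hyC
    · exact absurd hy hxD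
end

section
/- Let M = (E,*,cx) be an oriented matroid with set of hemispaces 𝔥. For any hemispace H and any X ⊆ H, the closure cx(X) (which is contained in H) equals the intersection of all hemispaces K ∈ 𝔥 with K ⊇ X. -/
/-!
A closed set `F` lying in a hemispace is sharp. If `z ∉ F` for a sharp `F`, then
`cx (F ∪ {z*})` is again sharp (this is where the elimination axioms enter), and by Zorn's
lemma, using that `cx` is finitary, it extends to a hemispace `K`; `z ∈ K` would make `z` a
loop, so `K` separates `z` from `F`. Hence every sharp set, in particular `cx X`, is the
intersection of the hemispaces containing it.
-/

namespace OMatroid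

variable {E : Type*} (M : OMatroid E)

open Set

theorem mem_star_image {A : Set E} {z : E} : z ∈ M.star '' A ↔ M.star z ∈ A :=
  ⟨fun ⟨b, hb, hbz⟩ => hbz ▸ (M.star_star b).symm ▸ hb, fun h => ⟨M.star z, h, M.star_star z⟩⟩

theorem star_image_loops : M.star '' M.loops = M.loops := by
  rw [loops, ← M.cx_star, image_empty]

theorem loops_subset_cx (A : Set E) : M.loops ⊆ M.cx A :=
  M.cx_mono (empty_subset A)

theorem star_mem_loops {z : E} (hz : z ∈ M.loops) : M.star z ∈ M.loops :=
  M.star_image_loops ▸ mem_image_of_mem M.star hz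

variable {M}

theorem IsClosed.cx_subset_iff {F A : Set E} (hF : M.IsClosed F) : M.cx A ⊆ F ↔ A ⊆ F :=
  ⟨(M.subset_cx A).trans, fun h => hF ▸ M.cx_mono h⟩

theorem IsClosed.loops_subset {F : Set E} (hF : M.IsClosed F) : M.loops ⊆ F :=
  hF ▸ M.loops_subset_cx F

theorem isSharp_of_inter_subset_loops {F : Set E} (hF : M.IsClosed F)
    (hFL : F ∩ M.star '' F ⊆ M.loops) : M.IsSharp F :=
  ⟨hF, hFL.antisymm fun _ hz =>
    ⟨hF.loops_subset hz, M.mem_star_image.2 (hF.loops_subset (M.star_mem_loops hz))⟩⟩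

theorem IsHemispace.isSharp_of_subset {H F : Set E} (hH : M.IsHemispace H) (hF : M.IsClosed F)
    (hFH : F ⊆ H) : M.IsSharp F :=
  isSharp_of_inter_subset_loops hF
    (hH.2.2 ▸ inter_subset_inter hFH (image_mono hFH))

variable (M)

theorem star_mem_cx_union_star {A : Set E} {a y : E} (ha : a ∈ M.cx (A ∪ {y}))
    (haA : a ∉ M.cx A) : M.star y ∈ M.cx (A ∪ {M.star a}) := by
  rw [← M.star_star y] at ha
  exact M.cx_mono (union_subset_union_left _ sdiff_subset) (M.M6 A a (M.star y) ha haA)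

theorem star_mem_cx_of_mem_cx_union {A : Set E} {y : E} (h : M.star y ∈ M.cx (A ∪ {y})) :
    M.star y ∈ M.cx A :=
  M.M5 A (M.star y) (by rwa [M.star_star])

variable {M}

theorem IsSharp.cx_union_singleton {G : Set E} {y : E} (hG : M.IsSharp G) (hy : M.star y ∉ G) :
    M.IsSharp (M.cx (G ∪ {y})) := by
  obtain ⟨hGc, hGs⟩ := hG
  set F := M.cx (G ∪ {y})
  have hGF : G ⊆ F := subset_union_left.trans (M.subset_cx _)
  -- `b, b* ∈ F` with `b ∉ G` would put `y*` into `F`, and then (M5) into `G`.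
  have mem_of_star_mem : ∀ b ∈ F, M.star b ∈ F → b ∈ G := by
    intro b hb hsb
    by_contra hbG
    have hyF : M.star y ∈ F :=
      (IsClosed.cx_subset_iff (M.cx_cx _)).2 (union_subset hGF (singleton_subset_iff.2 hsb))
        (M.star_mem_cx_union_star hb (hGc.symm ▸ hbG))
    exact hy (hGc ▸ M.star_mem_cx_of_mem_cx_union hyF)
  refine isSharp_of_inter_subset_loops (M.cx_cx _) ?_
  rintro a ⟨ha, hsa⟩
  rw [M.mem_star_image] at hsa
  rw [← hGs]
  exact ⟨mem_of_star_mem a ha hsa,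
    M.mem_star_image.2 (mem_of_star_mem _ hsa ((M.star_star a).symm ▸ ha))⟩

theorem isClosed_sUnion_of_directedOn {c : Set (Set E)} (hne : c.Nonempty)
    (hc : DirectedOn (· ⊆ ·) c) (hcl : ∀ F ∈ c, M.IsClosed F) : M.IsClosed (⋃₀ c) := by
  refine subset_antisymm (fun z hz => ?_) (M.subset_cx _)
  obtain ⟨B, hBc, hBfin, hzB⟩ := M.finitary _ z hz
  obtain ⟨F, hFc, hBF⟩ := hc.exists_mem_subset_of_finite_of_subset_sUnion hne hBfin hBc
  exact ⟨F, hFc, (hcl F hFc).cx_subset_iff.2 hBF hzB⟩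

theorem isSharp_sUnion_of_isChain {c : Set (Set E)} (hne : c.Nonempty)
    (hc : IsChain (· ⊆ ·) c) (hsh : ∀ F ∈ c, M.IsSharp F) : M.IsSharp (⋃₀ c) := by
  refine isSharp_of_inter_subset_loops
    (isClosed_sUnion_of_directedOn hne hc.directedOn fun F hF => (hsh F hF).1) ?_
  rintro z ⟨⟨F₁, hF₁, hzF₁⟩, hsz⟩
  obtain ⟨F₂, hF₂, hszF₂⟩ := M.mem_star_image.1 hsz
  rcases hc.total hF₁ hF₂ with h | h
  · exact (hsh F₂ hF₂).2 ▸ ⟨h hzF₁, M.mem_star_image.2 hszF₂⟩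
  · exact (hsh F₁ hF₁).2 ▸ ⟨hzF₁, M.mem_star_image.2 (h hszF₂)⟩

theorem IsSharp.exists_isHemispace_superset {F : Set E} (hF : M.IsSharp F) :
    ∃ K, M.IsHemispace K ∧ F ⊆ K := by
  obtain ⟨K, hFK, hmax⟩ := zorn_subset_nonempty {G | M.IsSharp G ∧ F ⊆ G}
    (fun c hcS hc hne => ⟨⋃₀ c,
      ⟨isSharp_sUnion_of_isChain hne hc fun G hG => (hcS hG).1,
        (hcS hne.some_mem).2.trans (subset_sUnion_of_mem hne.some_mem)⟩,
      fun _ => subset_sUnion_of_mem⟩) F ⟨hF, subset_rfl⟩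
  obtain ⟨hK, -⟩ := hmax.prop
  refine ⟨K, ⟨hK.1, eq_univ_of_forall fun z => ?_, hK.2⟩, hFK⟩
  by_cases hsz : M.star z ∈ K
  · exact Or.inr (M.mem_star_image.2 hsz)
  · have hKz : K ⊆ M.cx (K ∪ {z}) := subset_union_left.trans (M.subset_cx _)
    exact Or.inl (hmax.2 ⟨hK.cx_union_singleton hsz, hFK.trans hKz⟩ hKz
      (M.subset_cx _ (Or.inr rfl)))

theorem IsSharp.exists_isHemispace_superset_not_mem {F : Set E} (hF : M.IsSharp F) {z : E}
    (hz : z ∉ F) : ∃ K, M.IsHemispace K ∧ F ⊆ K ∧ z ∉ K := by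
  obtain ⟨K, hK, hFzK⟩ :=
    (hF.cx_union_singleton (y := M.star z) ((M.star_star z).symm ▸ hz)).exists_isHemispace_superset
  have hFK : F ∪ {M.star z} ⊆ K := (M.subset_cx _).trans hFzK
  refine ⟨K, hK, subset_union_left.trans hFK, fun hzK => hz (hF.1.loops_subset ?_)⟩
  exact hK.2.2 ▸ ⟨hzK, M.mem_star_image.2 (hFK (Or.inr rfl))⟩

theorem IsSharp.eq_sInter_isHemispace {F : Set E} (hF : M.IsSharp F) :
    F = ⋂₀ {K | M.IsHemispace K ∧ F ⊆ K} :=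
  (subset_sInter fun _ hK => hK.2).antisymm fun _ hz => by_contra fun hzF =>
    let ⟨K, hK, hFK, hzK⟩ := hF.exists_isHemispace_superset_not_mem hzF
    hzK (hz K ⟨hK, hFK⟩)

end OMatroid

/-- For a hemispace `H` of an oriented matroid and `X ⊆ H`, the closure
`cx X` is contained in `H` and equals the intersection of all hemispaces containing `X`. -/
theorem stmt_1 {E : Type*} (M : OMatroid E) (H : Set E) (hH : M.IsHemispace H)
    (X : Set E) (hX : X ⊆ H) :
    M.cx X ⊆ H ∧ M.cx X = ⋂₀ {K | M.IsHemispace K ∧ X ⊆ K} := by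
  have hXH : M.cx X ⊆ H := hH.1.cx_subset_iff.2 hX
  refine ⟨hXH, ?_⟩
  have hsupersets : {K | M.IsHemispace K ∧ X ⊆ K} = {K | M.IsHemispace K ∧ M.cx X ⊆ K} :=
    Set.ext fun K => and_congr_right fun hK => hK.1.cx_subset_iff.symm
  rw [hsupersets]
  exact (hH.isSharp_of_subset (M.cx_cx X) hXH).eq_sInter_isHemispace
end

section
/- Let R = (G,Φ,Φ⁺) be a faithful signed groupoid set and x, w, y, z morphisms with xw = yz (a commuting square). Then (x,w,y,z) is a square (i.e. x(Φ_w) = Φ_y) if and only if Φ_{x⁻¹} ∩ Φ_w = ∅, Φ_x ∩ Φ_y = ∅, Φ_z ∩ Φ_{y⁻¹} = ∅, and Φ_{z⁻¹} ∩ Φ_{w⁻¹} = ∅. -/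
open CategoryTheory

universe u v

/-- A signed groupoid set: a groupoid `G` acting on a family of definitely involuted
sets `R a` (`a ∈ Ob G`), with involution `neg`, positive parts `pos a`, and the action
commuting with the involution. -/
structure SGS (G : Type u) [Groupoid G] (R : G → Type v) where
  neg : ∀ {a : G}, R a → R a
  pos : ∀ a : G, Set (R a)
  act : ∀ {a b : G}, (b ⟶ a) → R b → R a
  neg_neg : ∀ {a : G} (x : R a), neg (neg x) = x
  pos_iff : ∀ {a : G} (x : R a), x ∈ pos a ↔ neg x ∉ pos a
  act_id : ∀ {a : G} (x : R a), act (𝟙 a) x = x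
  act_comp : ∀ {a b c : G} (g : c ⟶ b) (f : b ⟶ a) (x : R c),
      act f (act g x) = act (g ≫ f) x
  act_neg : ∀ {a b : G} (f : b ⟶ a) (x : R b), act f (neg x) = neg (act f x)

/-- The morphisms of `G` with codomain `a`. -/
abbrev SHoms (G : Type u) [Groupoid G] (a : G) : Type _ := Σ b : G, (b ⟶ a)

namespace SGS

variable {G : Type u} [Groupoid G] {R : G → Type v} (S : SGS G R)

/-- The inversion set of a morphism `f : b ⟶ a`: positive roots at `a` sent to
negative roots at `b` by `f⁻¹`. -/
def Phi {a b : G} (f : b ⟶ a) : Set (R a) :=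
  {α | α ∈ S.pos a ∧ S.act (Groupoid.inv f) α ∉ S.pos b}

/-- The inversion set of an element of `SHoms G a`. -/
def PhiS {a : G} (g : SHoms G a) : Set (R a) := S.Phi g.2

/-- `S` is faithful if only identity morphisms have empty inversion set. -/
def Faithful : Prop :=
  ∀ ⦃a b : G⦄ (f : b ⟶ a), S.Phi f = ∅ → ∃ h : b = a, f = eqToHom h

/-- `j` is an upper bound of `F` in the weak order at `a`. -/
def IsUB {a : G} (F : Set (SHoms G a)) (j : SHoms G a) : Prop :=
  ∀ g ∈ F, S.PhiS g ⊆ S.PhiS j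

/-- `j` is a least upper bound of `F` in the weak order at `a`. -/
def IsLUBw {a : G} (F : Set (SHoms G a)) (j : SHoms G a) : Prop :=
  S.IsUB F j ∧ ∀ k : SHoms G a, S.IsUB F k → S.PhiS j ⊆ S.PhiS k

/-- `S` is complete: the weak order at every object is a complete lattice
(equivalently, every family of morphisms with a common codomain has a join). -/
def Complete : Prop := ∀ (a : G) (F : Set (SHoms G a)), ∃ j : SHoms G a, S.IsLUBw F j

/-- `S` is finite: finitely many objects, morphisms and roots. -/
def FiniteSGS (_S : SGS G R) : Prop :=
  Finite G ∧ (∀ a b : G, Finite (a ⟶ b)) ∧ ∀ a : G, Finite (R a)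

/-- A square `(x, w, y, z)`: a commuting square `xw = yz` with `x(Φ_w) = Φ_y`. -/
def Square {a b c d : G} (x : b ⟶ d) (w : a ⟶ b) (y : c ⟶ d) (z : a ⟶ c) : Prop :=
  w ≫ x = z ≫ y ∧ S.act x '' S.Phi w = S.Phi y

/-- The positive real roots at `a`: the union of all inversion sets at `a`. -/
def posRe (a : G) : Set (R a) := ⋃ g : SHoms G a, S.PhiS g

/-- An atomic morphism: an atom of the weak order at its codomain. -/
def Atomic {a : G} (g : SHoms G a) : Prop :=
  S.PhiS g ≠ ∅ ∧ ∀ h : SHoms G a, S.PhiS h ⊆ S.PhiS g →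
    S.PhiS h = ∅ ∨ S.PhiS h = S.PhiS g

/-- A simple morphism: one whose inversion set is a singleton. -/
def Simple {a b : G} (f : b ⟶ a) : Prop := ∃ α : R a, S.Phi f = {α}

/-- Interval finiteness: every interval `[1ₐ, g]` of a weak order is finite. -/
def IntervalFinite : Prop :=
  ∀ (a : G) (g : SHoms G a), {h : SHoms G a | S.PhiS h ⊆ S.PhiS g}.Finite

/-- Preprincipal: interval finite, and the inversion set of an atomic morphism is
contained in, or disjoint from, any other inversion set at the same object. -/
def Preprincipal : Prop :=
  S.IntervalFinite ∧ ∀ (a : G) (s g : SHoms G a), S.Atomic s →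
    S.PhiS s ⊆ S.PhiS g ∨ S.PhiS s ∩ S.PhiS g = ∅

/-- Antipodal: the weak order at each object has a maximum element. -/
def Antipodal : Prop :=
  ∀ a : G, ∃ ω : SHoms G a, ∀ g : SHoms G a, S.PhiS g ⊆ S.PhiS ω

end SGS

/-! Transport every root to `R b` and record the sign pattern of a root `β` there: whether `β`,
`x β`, `w⁻¹ β` and `z w⁻¹ β = y⁻¹ x β` are positive. Each of the five conditions forbids some
sign patterns. Negation complements patterns, and up to this symmetry the square condition and
the four disjointness conditions forbid exactly the same ones. -/

theorem forall_and_not_iff_and_not_iff {X : Type*} (n : X → X) {p q r s : X → Prop}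
    (hp : ∀ β, p (n β) ↔ ¬p β) (hq : ∀ β, q (n β) ↔ ¬q β)
    (hr : ∀ β, r (n β) ↔ ¬r β) (hs : ∀ β, s (n β) ↔ ¬s β) :
    (∀ β, (p β ∧ ¬r β ↔ q β ∧ ¬s β)) ↔
      (∀ β, p β → ¬r β → q β) ∧ (∀ β, q β → ¬s β → p β) ∧
        (∀ β, s β → ¬q β → r β) ∧ (∀ β, r β → ¬p β → s β) := by
  constructor
  · intro h
    refine ⟨fun β => ?_, fun β => ?_, fun β => ?_, fun β => ?_⟩
    · have := h β; tauto
    · have := h β; tauto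
    · have := h (n β); rw [hp, hq, hr, hs] at this; tauto
    · have := h (n β); rw [hp, hq, hr, hs] at this; tauto
  · rintro ⟨h₁, h₂, h₃, h₄⟩ β
    have h₃' := h₃ (n β)
    have h₄' := h₄ (n β)
    rw [hq, hr, hs] at h₃'
    rw [hp, hr, hs] at h₄'
    have := h₁ β
    have := h₂ β
    tauto

namespace SGS

variable {G : Type u} [Groupoid G] {R : G → Type v} (S : SGS G R)

lemma act_bijective {a b : G} (f : b ⟶ a) : Function.Bijective (S.act f) :=
  Function.bijective_iff_has_inverse.2 ⟨S.act (Groupoid.inv f),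
    fun β => by rw [S.act_comp, Groupoid.comp_inv, S.act_id],
    fun α => by rw [S.act_comp, Groupoid.inv_comp, S.act_id]⟩

lemma neg_mem_pos_iff {a : G} (α : R a) : S.neg α ∈ S.pos a ↔ α ∉ S.pos a := by
  rw [S.pos_iff, S.neg_neg]

lemma act_neg_mem_pos_iff {a b : G} (f : b ⟶ a) (β : R b) :
    S.act f (S.neg β) ∈ S.pos a ↔ S.act f β ∉ S.pos a := by
  rw [S.act_neg, S.neg_mem_pos_iff]

lemma act_mem_Phi_iff {a b c : G} (e : c ⟶ a) (f : b ⟶ a) (γ : R c) :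
    S.act e γ ∈ S.Phi f ↔ S.act e γ ∈ S.pos a ∧ S.act (e ≫ Groupoid.inv f) γ ∉ S.pos b := by
  rw [← S.act_comp]
  rfl

lemma image_act_Phi_eq_Phi_iff {a b c d : G} (x : b ⟶ d) (w : a ⟶ b) (y : c ⟶ d) :
    S.act x '' S.Phi w = S.Phi y ↔ ∀ β : R b,
      (β ∈ S.pos b ∧ S.act (Groupoid.inv w) β ∉ S.pos a ↔
        S.act x β ∈ S.pos d ∧ S.act (x ≫ Groupoid.inv y) β ∉ S.pos c) := by
  rw [eq_comm, ← Set.preimage_eq_iff_eq_image (S.act_bijective x), eq_comm, Set.ext_iff]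
  exact forall_congr' fun β => by rw [Set.mem_preimage, S.act_mem_Phi_iff]; rfl

lemma Phi_inter_Phi_eq_empty_iff {a b c d : G} (e : d ⟶ a) (f : b ⟶ a) (g : c ⟶ a) :
    S.Phi f ∩ S.Phi g = ∅ ↔ ∀ δ : R d, S.act e δ ∈ S.pos a →
      S.act (e ≫ Groupoid.inv g) δ ∉ S.pos c → S.act (e ≫ Groupoid.inv f) δ ∈ S.pos b := by
  rw [Set.eq_empty_iff_forall_notMem, (S.act_bijective e).surjective.forall]
  refine forall_congr' fun δ => ?_
  rw [Set.mem_inter_iff, S.act_mem_Phi_iff, S.act_mem_Phi_iff]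
  tauto

end SGS

theorem stmt_8_general {G : Type u} [Groupoid G] {R : G → Type v} (S : SGS G R)
    {a b c d : G}
    (x : b ⟶ d) (w : a ⟶ b) (y : c ⟶ d) (z : a ⟶ c)
    (hcomm : w ≫ x = z ≫ y) :
    S.act x '' S.Phi w = S.Phi y ↔
      (S.Phi (Groupoid.inv x) ∩ S.Phi w = ∅ ∧
       S.Phi x ∩ S.Phi y = ∅ ∧
       S.Phi z ∩ S.Phi (Groupoid.inv y) = ∅ ∧
       S.Phi (Groupoid.inv z) ∩ S.Phi (Groupoid.inv w) = ∅) := by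
  have hxy : x ≫ inv y = inv w ≫ z := by
    rw [IsIso.eq_inv_comp, ← Category.assoc, hcomm, Category.assoc, IsIso.hom_inv_id,
      Category.comp_id]
  rw [S.image_act_Phi_eq_Phi_iff, S.Phi_inter_Phi_eq_empty_iff (𝟙 b),
    S.Phi_inter_Phi_eq_empty_iff x, S.Phi_inter_Phi_eq_empty_iff (Groupoid.inv w ≫ z),
    S.Phi_inter_Phi_eq_empty_iff (Groupoid.inv w)]
  simp only [Groupoid.inv_eq_inv, IsIso.inv_inv, Category.id_comp, Category.assoc,
    IsIso.hom_inv_id, IsIso.inv_hom_id, Category.comp_id, ← hcomm, IsIso.inv_hom_id_assoc, hxy,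
    S.act_id]
  exact forall_and_not_iff_and_not_iff S.neg S.neg_mem_pos_iff (S.act_neg_mem_pos_iff x)
    (S.act_neg_mem_pos_iff _) (S.act_neg_mem_pos_iff _)

/-- a commuting square `xw = yz` is a square (i.e. `x(Φ_w) = Φ_y`) iff
`Φ_{x⁻¹} ∩ Φ_w = ∅`, `Φ_x ∩ Φ_y = ∅`, `Φ_z ∩ Φ_{y⁻¹} = ∅` and `Φ_{z⁻¹} ∩ Φ_{w⁻¹} = ∅`. -/
theorem stmt_8 {G : Type u} [Groupoid G] {R : G → Type v} (S : SGS G R)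
    (hfa : S.Faithful) {a b c d : G}
    (x : b ⟶ d) (w : a ⟶ b) (y : c ⟶ d) (z : a ⟶ c)
    (hcomm : w ≫ x = z ≫ y) :
    S.act x '' S.Phi w = S.Phi y ↔
      (S.Phi (Groupoid.inv x) ∩ S.Phi w = ∅ ∧
       S.Phi x ∩ S.Phi y = ∅ ∧
       S.Phi z ∩ S.Phi (Groupoid.inv y) = ∅ ∧
       S.Phi (Groupoid.inv z) ∩ S.Phi (Groupoid.inv w) = ∅) :=
  stmt_8_general S x w y z hcomm
end

section
/- Let R be a faithful, interval-finite signed groupoid set. Then R is atomically generated: every non-identity morphism of G is a composite of atomic morphisms and their inverses. -/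
open CategoryTheory

universe u v

/-- Morphisms expressible as composites of atomic morphisms and their inverses
(together with the identities). -/
inductive GenAtom {G : Type u} [Groupoid G] {R : G → Type v} (S : SGS G R) :
    ∀ {a b : G}, (b ⟶ a) → Prop
  | id (a : G) : GenAtom S (𝟙 a)
  | atom {a b : G} (f : b ⟶ a) : S.Atomic ⟨b, f⟩ → GenAtom S f
  | inv {a b : G} (f : b ⟶ a) : GenAtom S f → GenAtom S (Groupoid.inv f)
  | comp {a b c : G} (g : c ⟶ b) (f : b ⟶ a) :
      GenAtom S g → GenAtom S f → GenAtom S (g ≫ f)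

/-!
Induct on the size of the interval `[1ₐ, f]`. If `Φ_f = ∅`, faithfulness makes `f` an identity.
Otherwise the finite interval contains an atom `r ≤ₐ f`, and `h ↦ r h` maps `[1, r⁻¹ f]` injectively
into `[r, f]`, which misses `1ₐ`; so `r⁻¹ f` has a smaller interval and `f = r (r⁻¹ f)`.
-/

namespace SGS

variable {G : Type u} [Groupoid G] {R : G → Type v} (S : SGS G R)

def weakIic {a b : G} (f : b ⟶ a) : Set (SHoms G a) := {h | S.PhiS h ⊆ S.Phi f}

lemma phi_id (a : G) : S.Phi (𝟙 a) = ∅ := by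
  ext α
  simp [Phi, Groupoid.inv_eq_inv, S.act_id]

lemma id_mem_weakIic {a b : G} (f : b ⟶ a) : (⟨a, 𝟙 a⟩ : SHoms G a) ∈ S.weakIic f := by
  simp [weakIic, PhiS, phi_id]

lemma act_inv_comp {a b c : G} (h : c ⟶ b) (r : b ⟶ a) (α : R a) :
    S.act (Groupoid.inv (h ≫ r)) α = S.act (Groupoid.inv h) (S.act (Groupoid.inv r) α) := by
  rw [S.act_comp]
  simp [Groupoid.inv_eq_inv]

lemma act_act_inv {a b : G} (r : b ⟶ a) (α : R a) : S.act r (S.act (Groupoid.inv r) α) = α := by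
  rw [S.act_comp, Groupoid.inv_comp, S.act_id]

lemma act_inv_comp_inv {a b c : G} (f : b ⟶ a) (r : c ⟶ a) (β : R c) :
    S.act (Groupoid.inv (f ≫ Groupoid.inv r)) β = S.act (Groupoid.inv f) (S.act r β) := by
  rw [act_inv_comp]
  simp [Groupoid.inv_eq_inv]

section Translate

variable {a b c d : G} {f : b ⟶ a} {r : c ⟶ a} {h : d ⟶ c}

lemma phi_comp_subset (hr : S.Phi r ⊆ S.Phi f) (hh : S.Phi h ⊆ S.Phi (f ≫ Groupoid.inv r)) :
    S.Phi (h ≫ r) ⊆ S.Phi f := by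
  rintro α ⟨hpos, hneg⟩
  rw [act_inv_comp] at hneg
  by_cases hβ : S.act (Groupoid.inv r) α ∈ S.pos c
  · obtain ⟨-, hf⟩ := hh ⟨hβ, hneg⟩
    rw [act_inv_comp_inv, act_act_inv] at hf
    exact ⟨hpos, hf⟩
  · exact hr ⟨hpos, hβ⟩

lemma phi_subset_phi_comp (hr : S.Phi r ⊆ S.Phi f)
    (hh : S.Phi h ⊆ S.Phi (f ≫ Groupoid.inv r)) : S.Phi r ⊆ S.Phi (h ≫ r) := by
  rintro α ⟨hpos, hneg⟩
  refine ⟨hpos, fun hd => ?_⟩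
  rw [act_inv_comp] at hd
  -- otherwise `-r⁻¹α` would be inverted by `h`, so `-α` by `f`, contradicting `α ∈ Φ_f`
  have hnβ : S.neg (S.act (Groupoid.inv r) α) ∈ S.Phi h := by
    refine ⟨by rwa [S.pos_iff, S.neg_neg], ?_⟩
    rwa [S.act_neg, ← S.pos_iff]
  obtain ⟨-, hf⟩ := hh hnβ
  rw [act_inv_comp_inv, S.act_neg, S.act_neg, act_act_inv, ← S.pos_iff] at hf
  exact (hr ⟨hpos, hneg⟩).2 hf

end Translate

lemma ncard_weakIic_comp_inv_lt {a b c : G} {f : b ⟶ a} {r : c ⟶ a}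
    (hfin : (S.weakIic f).Finite) (hr : S.Phi r ⊆ S.Phi f) (hr₀ : S.Phi r ≠ ∅) :
    (S.weakIic (f ≫ Groupoid.inv r)).ncard < (S.weakIic f).ncard := by
  let ψ : SHoms G c → SHoms G a := fun h => ⟨h.1, h.2 ≫ r⟩
  have hψ : Function.Injective ψ := by
    rintro ⟨d, h⟩ ⟨d', h'⟩ heq
    obtain ⟨rfl, heq⟩ := Sigma.mk.inj_iff.1 heq
    exact congrArg (Sigma.mk d) ((cancel_mono r).1 (eq_of_heq heq))
  have hmaps : ψ '' S.weakIic (f ≫ Groupoid.inv r) ⊆ S.weakIic f := by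
    rintro _ ⟨⟨d, h⟩, hh, rfl⟩
    exact S.phi_comp_subset hr hh
  have hid : (⟨a, 𝟙 a⟩ : SHoms G a) ∉ ψ '' S.weakIic (f ≫ Groupoid.inv r) := by
    rintro ⟨⟨d, h⟩, hh, heq⟩
    obtain ⟨rfl, heq⟩ := Sigma.mk.inj_iff.1 heq
    have := S.phi_subset_phi_comp hr hh
    rw [eq_of_heq heq, phi_id, Set.subset_empty_iff] at this
    exact hr₀ this
  rw [← Set.ncard_image_of_injective _ hψ]
  exact Set.ncard_lt_ncard ⟨hmaps, fun hsup => hid (hsup (S.id_mem_weakIic f))⟩ hfin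

lemma exists_atomic_subset {a b : G} {f : b ⟶ a} (hfin : (S.weakIic f).Finite)
    (hf : S.Phi f ≠ ∅) : ∃ r : SHoms G a, S.Atomic r ∧ S.PhiS r ⊆ S.Phi f := by
  obtain ⟨r, hr⟩ := Set.Finite.exists_minimalFor S.PhiS {h ∈ S.weakIic f | S.PhiS h ≠ ∅}
    (hfin.subset fun _ hh => hh.1) ⟨⟨b, f⟩, fun _ hα => hα, hf⟩
  refine ⟨r, ⟨hr.prop.2, fun h hsub => ?_⟩, hr.prop.1⟩
  by_cases h₀ : S.PhiS h = ∅
  · exact Or.inl h₀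
  · exact Or.inr (hsub.antisymm (hr.le_of_le ⟨hsub.trans hr.prop.1, h₀⟩ hsub))

end SGS

/-- a faithful, interval-finite signed groupoid set is atomically
generated: every morphism is a composite of atomic morphisms and their inverses. -/
theorem stmt_14 {G : Type u} [Groupoid G] {R : G → Type v} (S : SGS G R)
    (hfa : S.Faithful) (hif : S.IntervalFinite) :
    ∀ {a b : G} (f : b ⟶ a), GenAtom S f := by
  intro a b f
  induction hn : (S.weakIic f).ncard using Nat.strong_induction_on generalizing a b with
  | _ n ih =>
  by_cases hf : S.Phi f = ∅
  · obtain ⟨rfl, rfl⟩ := hfa f hf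
    exact GenAtom.id b
  obtain ⟨⟨c, r⟩, hatom, hr⟩ := S.exists_atomic_subset (hif a ⟨b, f⟩) hf
  have hlt := S.ncard_weakIic_comp_inv_lt (hif a ⟨b, f⟩) hr hatom.1
  have hfr : (f ≫ Groupoid.inv r) ≫ r = f := by simp
  exact hfr ▸ GenAtom.comp _ r (ih _ (hn ▸ hlt) _ rfl) (GenAtom.atom r hatom)
end
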